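/- Let L : ℝ^d → ℝ be differentiable, let μ_s > 0, and let θ, θ_* ∈ ℝ^d with ‖θ‖₀ ≤ s and ‖θ_*‖₀ ≤ s satisfy the restricted strong convexity inequality L(θ_*) ≥ L(θ) + ⟨∇L(θ), θ_* − θ⟩ + (μ_s/2)‖θ_* − θ‖². Set S = supp(θ) and S_* = supp(θ_*). Then (μ_s²/4)‖θ − θ_*‖² − ‖∇L(θ)|_{S∪S_*}‖² ≤ μ_s (L(θ_*) − L(θ)). -/

import Mathlib

open scoped BigOperators RealInnerProductSpace

open Classical in
noncomputable def supp {d : ℕ} (x : EuclideanSpace ℝ (Fin d)) : Finset (Fin d) :=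
  Finset.univ.filter fun j => x j ≠ 0

noncomputable def norm0 {d : ℕ} (x : EuclideanSpace ℝ (Fin d)) : ℕ := (supp x).card

noncomputable def restrict {d : ℕ} (x : EuclideanSpace ℝ (Fin d)) (S : Finset (Fin d)) :
    EuclideanSpace ℝ (Fin d) := WithLp.toLp 2 (fun j => if j ∈ S then x j else 0)

/-! Since `θ_* − θ` is supported in `S ∪ S_*`, the gradient term of the restricted strong
convexity inequality only sees `g|_{S ∪ S_*}`. Completing the square,
`0 ≤ ‖g|_{S ∪ S_*} + (μ_s/2)(θ_* − θ)‖²`, turns that inequality into the claim. -/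

section Sparse

variable {d : ℕ}

theorem mem_supp {x : EuclideanSpace ℝ (Fin d)} {j : Fin d} : j ∈ supp x ↔ x j ≠ 0 := by
  simp [supp]

theorem supp_sub_subset (x y : EuclideanSpace ℝ (Fin d)) : supp (x - y) ⊆ supp x ∪ supp y := by
  intro j hj
  rw [Finset.mem_union, mem_supp, mem_supp]
  rw [mem_supp, PiLp.sub_apply] at hj
  by_contra! h
  exact hj (by rw [h.1, h.2, sub_zero])

theorem restrict_apply (x : EuclideanSpace ℝ (Fin d)) (S : Finset (Fin d)) (j : Fin d) :
    restrict x S j = if j ∈ S then x j else 0 :=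
  rfl

theorem restrict_eq_self_of_supp_subset {x : EuclideanSpace ℝ (Fin d)} {S : Finset (Fin d)}
    (h : supp x ⊆ S) : restrict x S = x := by
  ext j
  rw [restrict_apply]
  split_ifs with hj
  · rfl
  · by_contra hx
    exact hj (h (mem_supp.2 (Ne.symm hx)))

theorem inner_restrict_left (x y : EuclideanSpace ℝ (Fin d)) (S : Finset (Fin d)) :
    ⟪restrict x S, y⟫ = ⟪x, restrict y S⟫ := by
  simp only [PiLp.inner_apply, restrict_apply, RCLike.inner_apply, conj_trivial]
  refine Finset.sum_congr rfl fun j _ => ?_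
  split_ifs <;> simp

theorem inner_restrict_left_of_supp_subset (x : EuclideanSpace ℝ (Fin d))
    {y : EuclideanSpace ℝ (Fin d)} {S : Finset (Fin d)} (h : supp y ⊆ S) :
    ⟪restrict x S, y⟫ = ⟪x, y⟫ := by
  rw [inner_restrict_left, restrict_eq_self_of_supp_subset h]

end Sparse

theorem neg_norm_sq_add_le_mul_real_inner {E : Type*} [NormedAddCommGroup E]
    [InnerProductSpace ℝ E] (a v : E) (c : ℝ) :
    -(‖a‖ ^ 2 + c ^ 2 / 4 * ‖v‖ ^ 2) ≤ c * ⟪a, v⟫ := by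
  have hsq : ‖a + (c / 2) • v‖ ^ 2 = ‖a‖ ^ 2 + c * ⟪a, v⟫ + c ^ 2 / 4 * ‖v‖ ^ 2 := by
    rw [norm_add_sq_real, real_inner_smul_right, norm_smul, Real.norm_eq_abs, mul_pow, sq_abs]
    ring
  nlinarith [sq_nonneg ‖a + (c / 2) • v‖]

theorem rsc_gradient_lower_bound {d : ℕ} (L : EuclideanSpace ℝ (Fin d) → ℝ)
    (μs : ℝ) (hμ : 0 < μs) (θ θstar g : EuclideanSpace ℝ (Fin d))
    (hrsc : L θ + ⟪g, θstar - θ⟫ + μs / 2 * ‖θstar - θ‖ ^ 2 ≤ L θstar) :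
    μs ^ 2 / 4 * ‖θ - θstar‖ ^ 2 - ‖restrict g (supp θ ∪ supp θstar)‖ ^ 2
      ≤ μs * (L θstar - L θ) := by
  have hsupp : supp (θstar - θ) ⊆ supp θ ∪ supp θstar :=
    (supp_sub_subset θstar θ).trans (Finset.union_comm _ _).le
  have hinner := inner_restrict_left_of_supp_subset g hsupp
  have hsquare := neg_norm_sq_add_le_mul_real_inner
    (restrict g (supp θ ∪ supp θstar)) (θstar - θ) μs
  rw [hinner] at hsquare
  rw [norm_sub_rev]
  nlinarith [mul_le_mul_of_nonneg_left hrsc hμ.le]
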